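/- arXiv:2502.19979 — 10 statements merged into one kernel-verified Lean document; each statement's English description precedes it below -/
import Mathlib

section
/- The MPCP function ψ_{τ,p} is concave on [0, +∞): for all x, y ≥ 0 and t ∈ [0,1], ψ_{τ,p}(t·x + (1−t)·y) ≥ t·ψ_{τ,p}(x) + (1−t)·ψ_{τ,p}(y). -/
noncomputable def psi (τ p : ℝ) (x : ℝ) : ℝ :=
  if |x| ≤ τ ^ (1 / p) then |x| - |x| ^ (1 + p) / ((1 + p) * τ)
  else p * τ ^ (1 / p) / (1 + p)

/-!
On `[0, ∞)` the MPCP function is `g (min x T)` with `g y = y - y^(1+p)/((1+p)τ)` and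
`T = τ^(1/p)`: at `x = T` both branches equal `p T/(1+p)`. The map `g` is concave, being the
identity minus a convex power, and nondecreasing on `[0, T]`, where `g' y = 1 - y^p/τ ≥ 0`.
A concave function that is nondecreasing on the range of the concave map `x ↦ min x T`
stays concave after composition.
-/

open Set

theorem ConcaveOn.comp_min_const {f : ℝ → ℝ} {a T : ℝ} (haT : a ≤ T)
    (hf : ConcaveOn ℝ (Icc a T) f) (hmono : MonotoneOn f (Icc a T)) :
    ConcaveOn ℝ (Ici a) (fun x => f (min x T)) := by
  have hmin : ConcaveOn ℝ (Ici a) (fun x : ℝ => min x T) :=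
    (concaveOn_id (convex_Ici a)).inf (concaveOn_const T (convex_Ici a))
  have himage : (fun x : ℝ => min x T) '' Ici a = Icc a T := by
    ext y
    constructor
    · rintro ⟨x, hx, rfl⟩
      exact ⟨le_min hx haT, min_le_right _ _⟩
    · rintro ⟨hay, hyT⟩
      exact ⟨y, hay, min_eq_left hyT⟩
  rw [← himage] at hf hmono
  exact hf.comp hmin hmono

noncomputable def mpcpCore (τ p y : ℝ) : ℝ :=
  y - y ^ (1 + p) / ((1 + p) * τ)

section

variable {τ p : ℝ}

theorem concaveOn_mpcpCore (hτ : 0 < τ) (hp : 0 ≤ p) :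
    ConcaveOn ℝ (Ici 0) (mpcpCore τ p) := by
  have hpow : ConvexOn ℝ (Ici 0) (fun y : ℝ => ((1 + p) * τ)⁻¹ • y ^ (1 + p)) :=
    (convexOn_rpow (by linarith)).smul (by positivity)
  refine ((concaveOn_id (convex_Ici 0)).sub hpow).congr fun y _ => ?_
  simp only [mpcpCore, id, Pi.sub_apply, smul_eq_mul]
  ring

theorem hasDerivAt_mpcpCore (hp : 0 ≤ p) (y : ℝ) :
    HasDerivAt (mpcpCore τ p) (1 - y ^ p / τ) y := by
  have hpow := (Real.hasDerivAt_rpow_const (x := y) (Or.inr (by linarith : 1 ≤ 1 + p))).div_const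
    ((1 + p) * τ)
  refine ((hasDerivAt_id' y).sub hpow).congr_deriv ?_
  rw [add_sub_cancel_left, mul_div_mul_left _ _ (by linarith : (1 + p) ≠ 0)]

theorem monotoneOn_mpcpCore (hτ : 0 < τ) (hp : 0 < p) :
    MonotoneOn (mpcpCore τ p) (Icc 0 (τ ^ (1 / p))) := by
  refine monotoneOn_of_hasDerivWithinAt_nonneg (convex_Icc _ _)
    (fun y _ => (hasDerivAt_mpcpCore hp.le y).continuousAt.continuousWithinAt)
    (fun y _ => (hasDerivAt_mpcpCore hp.le y).hasDerivWithinAt) fun y hy => ?_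
  rw [interior_Icc] at hy
  have hyp : y ^ p ≤ τ := by
    simpa only [one_div, Real.rpow_inv_rpow hτ.le hp.ne'] using
      Real.rpow_le_rpow hy.1.le hy.2.le hp.le
  rwa [sub_nonneg, div_le_one hτ]

theorem psi_eq_mpcpCore_min (hτ : 0 < τ) (hp : 0 < p) {x : ℝ} (hx : 0 ≤ x) :
    psi τ p x = mpcpCore τ p (min x (τ ^ (1 / p))) := by
  rw [psi, abs_of_nonneg hx]
  split_ifs with h
  · rw [min_eq_left h, mpcpCore]
  · have hT : 0 < τ ^ (1 / p) := Real.rpow_pos_of_pos hτ _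
    rw [min_eq_right (not_le.1 h).le, mpcpCore, Real.rpow_add hT, Real.rpow_one, one_div,
      Real.rpow_inv_rpow hτ.le hp.ne']
    field_simp
    ring

theorem concaveOn_psi (hτ : 0 < τ) (hp : 0 < p) : ConcaveOn ℝ (Ici 0) (psi τ p) :=
  (ConcaveOn.comp_min_const (Real.rpow_pos_of_pos hτ _).le
      ((concaveOn_mpcpCore hτ hp.le).subset Icc_subset_Ici_self (convex_Icc _ _))
      (monotoneOn_mpcpCore hτ hp)).congr
    fun _ hx => (psi_eq_mpcpCore_min hτ hp hx).symm

end

theorem mpcp_concaveOn_general (τ p : ℝ) (hτ : 1 < τ) (hp0 : 0 < p) :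
    ∀ x y t : ℝ, 0 ≤ x → 0 ≤ y → 0 ≤ t → t ≤ 1 →
      t * psi τ p x + (1 - t) * psi τ p y ≤ psi τ p (t * x + (1 - t) * y) := by
  intro x y t hx hy ht0 ht1
  simpa only [smul_eq_mul] using
    (concaveOn_psi (by linarith) hp0).2 hx hy ht0 (sub_nonneg.2 ht1) (add_sub_cancel t 1)

theorem mpcp_concaveOn (τ p : ℝ) (hτ : 1 < τ) (hp0 : 0 < p) (hp1 : p < 1) :
    ∀ x y t : ℝ, 0 ≤ x → 0 ≤ y → 0 ≤ t → t ≤ 1 →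
      t * psi τ p x + (1 - t) * psi τ p y ≤ psi τ p (t * x + (1 - t) * y) :=
  mpcp_concaveOn_general τ p hτ hp0
end

section
/- The MPCP function ψ_{τ,p} is subadditive on the nonnegative reals: for all x₁ ≥ 0 and x₂ ≥ 0, ψ_{τ,p}(x₁ + x₂) ≤ ψ_{τ,p}(x₁) + ψ_{τ,p}(x₂). -/
/-!
Write `T = τ ^ (1 / p)`. Below `T`, `ψ z = z - z ^ (1 + p) / ((1 + p) τ)`, so when `x₁ + x₂ ≤ T`
subadditivity of `ψ` is superadditivity of `z ↦ z ^ (1 + p)`. When `x₁ + x₂ > T`, `ψ (x₁ + x₂)`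
is the cap `p T / (1 + p)`; since `z ^ p ≤ T ^ p = τ` on `[0, T]`, one has
`ψ z ≥ p · min z T / (1 + p)` for `z ≥ 0`, and `min x₁ T + min x₂ T ≥ T` then reaches the cap.
-/

section

variable {τ p : ℝ}

lemma psi_of_le {z : ℝ} (hz : 0 ≤ z) (hzT : z ≤ τ ^ (1 / p)) :
    psi τ p z = z - z ^ (1 + p) / ((1 + p) * τ) := by
  rw [psi, abs_of_nonneg hz, if_pos hzT]

lemma psi_of_lt {z : ℝ} (hzT : τ ^ (1 / p) < z) : psi τ p z = p * τ ^ (1 / p) / (1 + p) := by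
  rw [psi, if_neg (not_le.mpr (hzT.trans_le (le_abs_self z)))]

lemma rpow_one_add_le_mul (hτ : 0 ≤ τ) (hp : 0 < p) {z : ℝ} (hz : 0 ≤ z)
    (hzT : z ≤ τ ^ (1 / p)) : z ^ (1 + p) ≤ τ * z := by
  have hzp : z ^ p ≤ τ :=
    calc z ^ p ≤ (τ ^ (1 / p)) ^ p := Real.rpow_le_rpow hz hzT hp.le
      _ = τ := by rw [one_div, Real.rpow_inv_rpow hτ hp.ne']
  rw [Real.rpow_add' hz (by positivity), Real.rpow_one, mul_comm]
  exact mul_le_mul_of_nonneg_right hzp hz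

lemma mul_min_div_le_psi (hτ : 0 < τ) (hp : 0 < p) {z : ℝ} (hz : 0 ≤ z) :
    p * min z (τ ^ (1 / p)) / (1 + p) ≤ psi τ p z := by
  rcases le_or_gt z (τ ^ (1 / p)) with hzT | hzT
  · rw [min_eq_left hzT, psi_of_le hz hzT]
    have hpow : z ^ (1 + p) / ((1 + p) * τ) ≤ z / (1 + p) := by
      rw [div_le_div_iff₀ (by positivity) (by positivity)]
      nlinarith [rpow_one_add_le_mul hτ.le hp hz hzT]
    have hsplit : p * z / (1 + p) = z - z / (1 + p) := by
      field_simp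
      ring
    linarith
  · rw [min_eq_right hzT.le, psi_of_lt hzT]

lemma psi_add_le_of_add_le (hτ : 0 ≤ τ) (hp : 0 ≤ p) {x y : ℝ} (hx : 0 ≤ x) (hy : 0 ≤ y)
    (hxy : x + y ≤ τ ^ (1 / p)) : psi τ p (x + y) ≤ psi τ p x + psi τ p y := by
  rw [psi_of_le (add_nonneg hx hy) hxy, psi_of_le hx (by linarith), psi_of_le hy (by linarith)]
  have hsuper : x ^ (1 + p) / ((1 + p) * τ) + y ^ (1 + p) / ((1 + p) * τ)
      ≤ (x + y) ^ (1 + p) / ((1 + p) * τ) := by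
    rw [← add_div]
    gcongr
    exact Real.add_rpow_le_rpow_add hx hy (by linarith)
  linarith

lemma le_min_add_min {x y T : ℝ} (hx : 0 ≤ x) (hy : 0 ≤ y) (hT : 0 ≤ T) (hxy : T ≤ x + y) : T ≤ min x T + min y T := by
  simp only [min_def]
  split_ifs <;> linarith

lemma psi_add_le_of_lt_add (hτ : 0 < τ) (hp : 0 < p) {x y : ℝ} (hx : 0 ≤ x) (hy : 0 ≤ y)
    (hxy : τ ^ (1 / p) < x + y) : psi τ p (x + y) ≤ psi τ p x + psi τ p y :=
  calc psi τ p (x + y) = p * τ ^ (1 / p) / (1 + p) := psi_of_lt hxy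
    _ ≤ p * min x (τ ^ (1 / p)) / (1 + p) + p * min y (τ ^ (1 / p)) / (1 + p) := by
      rw [← add_div, ← mul_add]
      gcongr
      exact le_min_add_min hx hy (Real.rpow_nonneg hτ.le _) hxy.le
    _ ≤ psi τ p x + psi τ p y :=
      add_le_add (mul_min_div_le_psi hτ hp hx) (mul_min_div_le_psi hτ hp hy)

end

theorem mpcp_subadditive_general (τ p : ℝ) (hτ : 1 < τ) (hp0 : 0 < p) :
    ∀ x₁ x₂ : ℝ, 0 ≤ x₁ → 0 ≤ x₂ →
      psi τ p (x₁ + x₂) ≤ psi τ p x₁ + psi τ p x₂ := by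
  intro x₁ x₂ h₁ h₂
  rcases le_or_gt (x₁ + x₂) (τ ^ (1 / p)) with hle | hlt
  · exact psi_add_le_of_add_le (by linarith) hp0.le h₁ h₂ hle
  · exact psi_add_le_of_lt_add (by linarith) hp0 h₁ h₂ hlt

theorem mpcp_subadditive (τ p : ℝ) (hτ : 1 < τ) (hp0 : 0 < p) (hp1 : p < 1) :
    ∀ x₁ x₂ : ℝ, 0 ≤ x₁ → 0 ≤ x₂ →
      psi τ p (x₁ + x₂) ≤ psi τ p x₁ + psi τ p x₂ :=
  mpcp_subadditive_general τ p hτ hp0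
end

section
/- The derivative of the MPCP function is Lipschitz on any interval bounded away from zero: for every ℓ > 0 and all x, y ≥ ℓ, |ψ'_{τ,p}(x) − ψ'_{τ,p}(y)| ≤ (p·ℓ^{p−1}/τ)·|x − y|, where ψ'_{τ,p}(x) = 1 − x^p/τ for 0 < x ≤ τ^{1/p} and ψ'_{τ,p}(x) = 0 for x > τ^{1/p}. -/
noncomputable def psiDeriv (τ p : ℝ) (x : ℝ) : ℝ :=
  if x ≤ τ ^ (1 / p) then 1 - x ^ p / τ else 0

lemma psiDeriv_eq_max (τ p : ℝ) (hτ : 1 < τ) (hp0 : 0 < p) (x : ℝ) (hx : 0 < x) :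
    psiDeriv τ p x = max (1 - x ^ p / τ) 0 := by
  have hτ0 : (0:ℝ) < τ := lt_trans one_pos hτ
  have hkey : (τ ^ (1/p) : ℝ) ^ p = τ := by
    rw [← Real.rpow_mul hτ0.le, one_div_mul_cancel hp0.ne', Real.rpow_one]
  unfold psiDeriv
  split_ifs with h
  · have hxp : x ^ p ≤ τ := by
      calc x ^ p ≤ (τ ^ (1/p)) ^ p := Real.rpow_le_rpow hx.le h hp0.le
        _ = τ := hkey
    have : 0 ≤ 1 - x ^ p / τ := by
      rw [sub_nonneg, div_le_one hτ0]; exact hxp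
    exact (max_eq_left this).symm
  · push_neg at h
    have hxp : τ ≤ x ^ p := by
      calc τ = (τ ^ (1/p)) ^ p := hkey.symm
        _ ≤ x ^ p := Real.rpow_le_rpow (Real.rpow_nonneg hτ0.le _) h.le hp0.le
    have : 1 - x ^ p / τ ≤ 0 := by
      rw [sub_nonpos, le_div_iff₀ hτ0, one_mul]; exact hxp
    exact (max_eq_right this).symm

lemma rpow_sub_le (p ℓ : ℝ) (hp0 : 0 < p) (hp1 : p < 1) (hℓ : 0 < ℓ) :
    ∀ x y : ℝ, ℓ ≤ x → ℓ ≤ y → |x ^ p - y ^ p| ≤ p * ℓ ^ (p - 1) * |x - y| := by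
  intro x y hx hy
  have hC : ∀ t ∈ Set.Ici ℓ, ‖p * t ^ (p - 1)‖ ≤ p * ℓ ^ (p - 1) := by
    intro t ht
    rw [Real.norm_eq_abs, abs_mul, abs_of_pos hp0,
      abs_of_nonneg (Real.rpow_nonneg (hℓ.trans_le ht).le _)]
    exact mul_le_mul_of_nonneg_left
      (Real.rpow_le_rpow_of_nonpos hℓ ht (by linarith)) hp0.le
  have hd : ∀ t ∈ Set.Ici ℓ, HasDerivWithinAt (fun s : ℝ => s ^ p)
      (p * t ^ (p - 1)) (Set.Ici ℓ) t := by
    intro t ht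
    exact (Real.hasDerivAt_rpow_const (Or.inl (hℓ.trans_le ht).ne')).hasDerivWithinAt
  have := (convex_Ici ℓ).norm_image_sub_le_of_norm_hasDerivWithin_le hd hC hy hx
  simpa [Real.norm_eq_abs] using this

theorem mpcp_deriv_lipschitz (τ p : ℝ) (hτ : 1 < τ) (hp0 : 0 < p) (hp1 : p < 1) :
    ∀ ℓ : ℝ, 0 < ℓ → ∀ x y : ℝ, ℓ ≤ x → ℓ ≤ y →
      |psiDeriv τ p x - psiDeriv τ p y| ≤ (p * ℓ ^ (p - 1) / τ) * |x - y| := by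
  intro ℓ hℓ x y hx hy
  have hτ0 : (0:ℝ) < τ := lt_trans one_pos hτ
  rw [psiDeriv_eq_max τ p hτ hp0 x (hℓ.trans_le hx),
      psiDeriv_eq_max τ p hτ hp0 y (hℓ.trans_le hy)]
  calc |max (1 - x ^ p / τ) 0 - max (1 - y ^ p / τ) 0|
      ≤ |(1 - x ^ p / τ) - (1 - y ^ p / τ)| := abs_max_sub_max_le_abs _ _ _
    _ = |x ^ p - y ^ p| / τ := by
        rw [show (1 - x ^ p / τ) - (1 - y ^ p / τ) = (y ^ p - x ^ p)/τ by ring,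
          abs_div, abs_of_pos hτ0, abs_sub_comm]
    _ ≤ p * ℓ ^ (p - 1) * |x - y| / τ := by
        gcongr
        exact rpow_sub_le p ℓ hp0 hp1 hℓ x y hx hy
    _ = (p * ℓ ^ (p - 1) / τ) * |x - y| := by ring
end

section
/- For fixed x ∈ ℝ and fixed 0 < p < 1, the MPCP function is monotone non-decreasing in the parameter τ: if 1 < τ₁ ≤ τ₂ then ψ_{τ₁,p}(x) ≤ ψ_{τ₂,p}(x). -/
lemma g_deriv (p τ : ℝ) (hp0 : 0 < p) (t : ℝ) :
    HasDerivAt (fun t : ℝ => t - t ^ (1 + p) / ((1 + p) * τ))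
      (1 - (1 + p) * t ^ (1 + p - 1) / ((1 + p) * τ)) t := by
  exact (hasDerivAt_id t).sub
    ((Real.hasDerivAt_rpow_const (Or.inr (by linarith))).div_const _)

lemma g_mono (p : ℝ) (hp0 : 0 < p) (τ : ℝ) (hτ : 1 < τ) :
    MonotoneOn (fun t : ℝ => t - t ^ (1 + p) / ((1 + p) * τ))
      (Set.Icc 0 (τ ^ (1 / p))) := by
  have hτ0 : (0:ℝ) < τ := by linarith
  have h1p : (0:ℝ) < 1 + p := by linarith
  apply monotoneOn_of_deriv_nonneg (convex_Icc _ _)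
  · exact (Differentiable.continuous (fun t => (g_deriv p τ hp0 t).differentiableAt)).continuousOn
  · intro t _
    exact (g_deriv p τ hp0 t).differentiableAt.differentiableWithinAt
  · intro t ht
    rw [interior_Icc] at ht
    rw [(g_deriv p τ hp0 t).deriv]
    have hpe : 1 + p - 1 = p := by ring
    rw [hpe, mul_div_mul_left _ _ (by linarith : (1:ℝ)+p ≠ 0)]
    have htp : t ^ p ≤ τ := by
      have := Real.rpow_le_rpow ht.1.le ht.2.le hp0.le
      rwa [← Real.rpow_mul hτ0.le, one_div, inv_mul_cancel₀ hp0.ne', Real.rpow_one] at this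
    have : t ^ p / τ ≤ 1 := (div_le_one hτ0).2 htp
    linarith

lemma g_at_end (p τ : ℝ) (hp0 : 0 < p) (hτ : 1 < τ) :
    τ ^ (1/p) - (τ ^ (1/p)) ^ (1 + p) / ((1 + p) * τ) = p * τ ^ (1/p) / (1 + p) := by
  have hτ0 : (0:ℝ) < τ := by linarith
  have h1p : (0:ℝ) < 1 + p := by linarith
  have key : (τ ^ (1/p)) ^ (1 + p) = τ ^ (1/p) * τ := by
    rw [← Real.rpow_mul hτ0.le]
    have he : 1/p*(1+p) = 1/p + 1 := by field_simp
    rw [he, Real.rpow_add hτ0, Real.rpow_one]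
  rw [key]
  field_simp
  ring

theorem mpcp_mono_in_tau (p : ℝ) (hp0 : 0 < p) (hp1 : p < 1) (x : ℝ) :
    ∀ τ₁ τ₂ : ℝ, 1 < τ₁ → τ₁ ≤ τ₂ → psi τ₁ p x ≤ psi τ₂ p x := by
  intro τ₁ τ₂ hτ₁ h12
  have hτ₂ : 1 < τ₂ := lt_of_lt_of_le hτ₁ h12
  have hτ₁0 : (0:ℝ) < τ₁ := by linarith
  have hτ₂0 : (0:ℝ) < τ₂ := by linarith
  have h1p : (0:ℝ) < 1 + p := by linarith
  have hr : τ₁ ^ (1/p) ≤ τ₂ ^ (1/p) := Real.rpow_le_rpow hτ₁0.le h12 (by positivity)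
  unfold psi
  by_cases h1 : |x| ≤ τ₁ ^ (1 / p)
  · have h2 : |x| ≤ τ₂ ^ (1 / p) := h1.trans (by simpa using hr)
    rw [if_pos h1, if_pos h2]
    have hx : (0:ℝ) ≤ |x| ^ (1 + p) := Real.rpow_nonneg (abs_nonneg x) _
    have hdiv : |x| ^ (1 + p) / ((1 + p) * τ₂) ≤ |x| ^ (1 + p) / ((1 + p) * τ₁) := by
      gcongr
    linarith
  · rw [if_neg h1]
    push_neg at h1
    by_cases h2 : |x| ≤ τ₂ ^ (1 / p)
    · rw [if_pos h2]
      have e1 := g_at_end p τ₁ hp0 hτ₁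
      have hdiv : (τ₁ ^ (1/p)) ^ (1 + p) / ((1 + p) * τ₂)
          ≤ (τ₁ ^ (1/p)) ^ (1 + p) / ((1 + p) * τ₁) := by
        gcongr
      have hmem1 : τ₁ ^ (1/p) ∈ Set.Icc (0:ℝ) (τ₂ ^ (1/p)) :=
        ⟨Real.rpow_nonneg hτ₁0.le _, hr⟩
      have hmem2 : |x| ∈ Set.Icc (0:ℝ) (τ₂ ^ (1/p)) := ⟨abs_nonneg x, h2⟩
      have step2 := g_mono p hp0 τ₂ hτ₂ hmem1 hmem2 h1.le
      simp only at step2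
      rw [one_div] at e1 hdiv step2 ⊢
      linarith
    · rw [if_neg h2]
      gcongr
end

section
/- Let y > 0 and suppose x₊ > 0 satisfies x₊ + ρ − ρ·x₊^p/τ = y. Then g(x₊) = g(0) + (1/2)·x₊^{1+p}·(x_a^{1−p} − x₊^{1−p}), where g(x) = (1/2)(x − y)² + ρ·(x − x^{1+p}/((1+p)τ)) and x_a = (2ρp/((1+p)τ))^{1/(1−p)}. In particular, g(x₊) ≤ g(0) if and only if x₊ ≥ x_a. -/
theorem g_value_at_solution (τ p ρ y : ℝ) (hτ : 1 < τ) (hp0 : 0 < p) (hp1 : p < 1)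
    (hρ : 0 < ρ) (hy : 0 < y) (xs : ℝ) (hx : 0 < xs)
    (heq : xs + ρ - ρ * xs ^ p / τ = y) :
    (1 / 2) * (xs - y) ^ 2 + ρ * (xs - xs ^ (1 + p) / ((1 + p) * τ)) =
      ((1 / 2) * ((0 : ℝ) - y) ^ 2 + ρ * ((0 : ℝ) - (0 : ℝ) ^ (1 + p) / ((1 + p) * τ))) +
        (1 / 2) * xs ^ (1 + p) *
          (((2 * ρ * p / ((1 + p) * τ)) ^ (1 / (1 - p))) ^ (1 - p) - xs ^ (1 - p)) ∧
    ((1 / 2) * (xs - y) ^ 2 + ρ * (xs - xs ^ (1 + p) / ((1 + p) * τ)) ≤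
        (1 / 2) * ((0 : ℝ) - y) ^ 2 + ρ * ((0 : ℝ) - (0 : ℝ) ^ (1 + p) / ((1 + p) * τ)) ↔
      (2 * ρ * p / ((1 + p) * τ)) ^ (1 / (1 - p)) ≤ xs) := by
  have hτ0 : (0:ℝ) < τ := lt_trans one_pos hτ
  have hp1' : (0:ℝ) < 1 - p := by linarith
  have h1p : (0:ℝ) < 1 + p := by linarith
  have hc : (0:ℝ) < 2 * ρ * p / ((1 + p) * τ) := by positivity
  set c : ℝ := 2 * ρ * p / ((1 + p) * τ) with hcdef
  have ha : (c ^ (1 / (1 - p))) ^ (1 - p) = c := by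
    rw [← Real.rpow_mul hc.le, one_div, inv_mul_cancel₀ hp1'.ne', Real.rpow_one]
  have h0 : (0:ℝ) ^ (1 + p) = 0 := Real.zero_rpow h1p.ne'
  have h1 : xs ^ (1 + p : ℝ) = xs * xs ^ p := by
    rw [Real.rpow_add hx, Real.rpow_one]
  have h2 : xs ^ (1 + p : ℝ) * xs ^ (1 - p : ℝ) = xs ^ 2 := by
    rw [← Real.rpow_add hx]
    norm_num
  have key : (1 / 2) * (xs - y) ^ 2 + ρ * (xs - xs ^ (1 + p) / ((1 + p) * τ)) =
      ((1 / 2) * ((0 : ℝ) - y) ^ 2 + ρ * ((0 : ℝ) - (0 : ℝ) ^ (1 + p) / ((1 + p) * τ))) +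
        (1 / 2) * xs ^ (1 + p) * (c - xs ^ (1 - p)) := by
    have hA : (0:ℝ) < xs ^ p := Real.rpow_pos_of_pos hx _
    have hC : xs ^ (1 - p : ℝ) = xs / xs ^ p := by
      rw [Real.rpow_sub hx, Real.rpow_one]
    rw [h0, ← heq, hcdef, h1, hC]
    have hτne : τ ≠ 0 := hτ0.ne'
    have h1pne : (1 + p : ℝ) ≠ 0 := h1p.ne'
    field_simp
    ring
  have hxp : (0:ℝ) < xs ^ (1 + p : ℝ) := Real.rpow_pos_of_pos hx _
  have hiff : c ≤ xs ^ (1 - p : ℝ) ↔ c ^ (1 / (1 - p)) ≤ xs := by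
    constructor
    · intro hle
      have := (Real.rpow_le_rpow_iff hc.le (Real.rpow_pos_of_pos hx _).le
        (by positivity : (0:ℝ) < 1 / (1 - p))).mpr hle
      rwa [← Real.rpow_mul hx.le, mul_one_div, div_self hp1'.ne', Real.rpow_one] at this
    · intro h
      have := Real.rpow_le_rpow (Real.rpow_pos_of_pos hc _).le h hp1'.le
      rwa [ha] at this
  refine ⟨by rw [key, ha], ?_⟩
  rw [key]
  constructor
  · intro h
    refine hiff.mp ?_
    nlinarith
  · intro h
    have hle : c ≤ xs ^ (1 - p : ℝ) := hiff.mpr h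
    nlinarith
end

section
/- Suppose y ∈ ℝ satisfies x_a ≤ y, h_a < y and y < τ^{1/p}, where x_a = (2ρp/((1+p)τ))^{1/(1−p)} and h_a = x_a − ρ·x_a^p/τ + ρ. Then the map α(x) = y − ρ + ρ·x^p/τ maps the interval [x_a, y] into itself; indeed, for every x ∈ [x_a, y] one has x_a < α(x) < y. -/
theorem alpha_maps_into (τ p ρ y : ℝ) (hτ : 1 < τ) (hp0 : 0 < p) (hp1 : p < 1)
    (hρ : 0 < ρ)
    (hxa : (2 * ρ * p / ((1 + p) * τ)) ^ (1 / (1 - p)) ≤ y)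
    (hha : (2 * ρ * p / ((1 + p) * τ)) ^ (1 / (1 - p)) -
        ρ * ((2 * ρ * p / ((1 + p) * τ)) ^ (1 / (1 - p))) ^ p / τ + ρ < y)
    (hyt : y < τ ^ (1 / p)) :
    ∀ x ∈ Set.Icc ((2 * ρ * p / ((1 + p) * τ)) ^ (1 / (1 - p))) y,
      (2 * ρ * p / ((1 + p) * τ)) ^ (1 / (1 - p)) < y - ρ + ρ * x ^ p / τ ∧
        y - ρ + ρ * x ^ p / τ < y := by
  intro x hx
  obtain ⟨hx1, hx2⟩ := hx
  set c : ℝ := 2 * ρ * p / ((1 + p) * τ) with hc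
  have hτ0 : (0:ℝ) < τ := lt_trans one_pos hτ
  have hc0 : 0 < c := by
    apply div_pos (by nlinarith) (by nlinarith)
  have hxa0 : (0:ℝ) < c ^ (1 / (1 - p)) := Real.rpow_pos_of_pos hc0 _
  have hx0 : (0:ℝ) < x := lt_of_lt_of_le hxa0 hx1
  have hy0 : (0:ℝ) < y := lt_of_lt_of_le hxa0 hxa
  constructor
  · -- lower bound
    have hmono : (c ^ (1 / (1 - p))) ^ p ≤ x ^ p :=
      Real.rpow_le_rpow (le_of_lt hxa0) hx1 (le_of_lt hp0)
    have : ρ * (c ^ (1 / (1 - p))) ^ p / τ ≤ ρ * x ^ p / τ := by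
      gcongr
    linarith
  · -- upper bound
    have hxp : x ^ p < τ := by
      have h1 : x ^ p ≤ y ^ p := Real.rpow_le_rpow (le_of_lt hx0) hx2 (le_of_lt hp0)
      have h2 : y ^ p < (τ ^ (1 / p)) ^ p :=
        Real.rpow_lt_rpow (le_of_lt hy0) hyt hp0
      have h3 : (τ ^ (1 / p)) ^ p = τ := by
        rw [one_div, Real.rpow_inv_rpow (le_of_lt hτ0) (ne_of_gt hp0)]
      linarith
    have : ρ * x ^ p / τ < ρ := by
      rw [div_lt_iff₀ hτ0]
      nlinarith
    linarith
end

section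
/- Suppose y ∈ ℝ satisfies x_a ≤ y, where x_a = (2ρp/((1+p)τ))^{1/(1−p)}. Then the map α(x) = y − ρ + ρ·x^p/τ is a contraction on [x_a, y] with contraction constant (1+p)/2 < 1: for all x, z ∈ [x_a, y], |α(x) − α(z)| ≤ ((1+p)/2)·|x − z|. -/
open Real

lemma rpow_sub_le_mul (p : ℝ) (hp0 : 0 < p) (hp1 : p ≤ 1) {z x : ℝ} (hz : 0 < z)
    (hzx : z ≤ x) : x ^ p - z ^ p ≤ p * z ^ (p - 1) * (x - z) := by
  have hx : 0 < x := hz.trans_le hzx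
  have hs : -1 ≤ x / z - 1 := by
    have : 1 ≤ x / z := (one_le_div hz).2 hzx
    linarith
  have hber := rpow_one_add_le_one_add_mul_self hs hp0.le hp1
  rw [add_sub_cancel] at hber
  have hxz : x ^ p = z ^ p * (x / z) ^ p := by
    rw [← Real.mul_rpow hz.le (by positivity), mul_div_cancel₀ _ hz.ne']
  have hzpos : (0:ℝ) < z ^ p := Real.rpow_pos_of_pos hz p
  have h1 : x ^ p ≤ z ^ p * (1 + p * (x / z - 1)) := by
    rw [hxz]; exact mul_le_mul_of_nonneg_left hber hzpos.le
  have hzz : z ^ p / z = z ^ (p - 1) := by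
    rw [Real.rpow_sub hz, Real.rpow_one]
  calc x ^ p - z ^ p ≤ z ^ p * (1 + p * (x / z - 1)) - z ^ p := by linarith
    _ = p * (z ^ p / z) * (x - z) := by field_simp; ring
    _ = p * z ^ (p - 1) * (x - z) := by rw [hzz]

theorem alpha_contraction (τ p ρ y : ℝ) (hτ : 1 < τ) (hp0 : 0 < p) (hp1 : p < 1)
    (hρ : 0 < ρ)
    (hxa : (2 * ρ * p / ((1 + p) * τ)) ^ (1 / (1 - p)) ≤ y) :
    (1 + p) / 2 < 1 ∧
    ∀ x ∈ Set.Icc ((2 * ρ * p / ((1 + p) * τ)) ^ (1 / (1 - p))) y,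
      ∀ z ∈ Set.Icc ((2 * ρ * p / ((1 + p) * τ)) ^ (1 / (1 - p))) y,
        |(y - ρ + ρ * x ^ p / τ) - (y - ρ + ρ * z ^ p / τ)| ≤ ((1 + p) / 2) * |x - z| := by
  set c : ℝ := 2 * ρ * p / ((1 + p) * τ) with hc
  have hτ0 : (0:ℝ) < τ := lt_trans one_pos hτ
  have hcpos : 0 < c := by
    apply div_pos (by positivity) (by positivity)
  set xa : ℝ := c ^ (1 / (1 - p)) with hxadef
  have hxapos : 0 < xa := Real.rpow_pos_of_pos hcpos _
  have h1p : (0:ℝ) < 1 - p := by linarith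
  have hxa1p : xa ^ (1 - p) = c := by
    rw [hxadef, ← Real.rpow_mul hcpos.le, one_div_mul_cancel h1p.ne', Real.rpow_one]
  -- key bound: for z ≥ xa, ρ * p * z ^ (p - 1) / τ ≤ (1 + p) / 2
  have key : ∀ z : ℝ, xa ≤ z → ρ * p * z ^ (p - 1) / τ ≤ (1 + p) / 2 := by
    intro z hz
    have hzpos : 0 < z := hxapos.trans_le hz
    have h2 : c ≤ z ^ (1 - p) := by
      rw [← hxa1p]; exact Real.rpow_le_rpow hxapos.le hz h1p.le
    have h3 : z ^ (p - 1) ≤ c⁻¹ := by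
      have : z ^ (p - 1) = (z ^ (1 - p))⁻¹ := by
        rw [← Real.rpow_neg hzpos.le]; ring_nf
      rw [this]
      exact inv_anti₀ hcpos h2
    have hcinv : c⁻¹ = (1 + p) * τ / (2 * ρ * p) := by
      rw [hc, inv_div]
    rw [hcinv] at h3
    calc ρ * p * z ^ (p - 1) / τ ≤ ρ * p * ((1 + p) * τ / (2 * ρ * p)) / τ := by gcongr
      _ = (1 + p) / 2 := by field_simp
  refine ⟨by linarith, ?_⟩
  -- symmetric main estimate
  have main : ∀ x ∈ Set.Icc xa y, ∀ z ∈ Set.Icc xa y, z ≤ x →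
      ρ * x ^ p / τ - ρ * z ^ p / τ ≤ ((1 + p) / 2) * (x - z) := by
    intro x hx z hzm hzx
    have hzpos : 0 < z := hxapos.trans_le hzm.1
    have hsub := rpow_sub_le_mul p hp0 hp1.le hzpos hzx
    have hk := key z hzm.1
    have h5 : ρ * x ^ p / τ - ρ * z ^ p / τ = (ρ / τ) * (x ^ p - z ^ p) := by ring
    have h6 : (ρ / τ) * (x ^ p - z ^ p) ≤ (ρ / τ) * (p * z ^ (p - 1) * (x - z)) :=
      mul_le_mul_of_nonneg_left hsub (by positivity)
    have h7 : (ρ / τ) * (p * z ^ (p - 1) * (x - z)) = (ρ * p * z ^ (p - 1) / τ) * (x - z) := by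
      ring
    have h8 : (ρ * p * z ^ (p - 1) / τ) * (x - z) ≤ ((1 + p) / 2) * (x - z) :=
      mul_le_mul_of_nonneg_right hk (by linarith)
    linarith [h6, h8, h7 ▸ h6]
  intro x hx z hz
  rcases le_total z x with h | h
  · have hnn : 0 ≤ x - z := by linarith
    rw [abs_of_nonneg hnn]
    have := main x hx z hz h
    have hmon : ρ * z ^ p / τ ≤ ρ * x ^ p / τ := by
      have : z ^ p ≤ x ^ p := Real.rpow_le_rpow (le_of_lt (hxapos.trans_le hz.1)) h hp0.le
      gcongr
    rw [abs_of_nonneg (by linarith)]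
    linarith
  · have hnn : 0 ≤ z - x := by linarith
    rw [abs_sub_comm, abs_sub_comm x z, abs_of_nonneg hnn, abs_of_nonneg (by
      have hmon : x ^ p ≤ z ^ p := Real.rpow_le_rpow (le_of_lt (hxapos.trans_le hx.1)) h hp0.le
      have : ρ * x ^ p / τ ≤ ρ * z ^ p / τ := by gcongr
      linarith)]
    have := main z hz x hx h
    linarith
end

section
/- Suppose y ∈ ℝ satisfies x_a ≤ y, h_a < y and y < τ^{1/p}, where x_a = (2ρp/((1+p)τ))^{1/(1−p)} and h_a = x_a − ρ·x_a^p/τ + ρ. Then the map α(x) = y − ρ + ρ·x^p/τ has exactly one fixed point x† in [x_a, y]; a point x ∈ [x_a, y] is a fixed point of α if and only if x + ρ − ρ·x^p/τ = y; and for every initial point x₀ ∈ [x_a, y], the iterates x_{k+1} = α(x_k) converge to x†. -/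
/-!
On `[x_a, ∞)` the derivative `ρ p x^(p-1) / τ` of `α` is at most its value `(1 + p) / 2` at `x_a`
(this is what `x_a` is chosen for), so `α` is a contraction there. Since `α` is increasing,
`x_a < α x_a` (which is `h_a < y`) and `α y < y` (which is `y^p < τ`) make `[x_a, y]` invariant,
and the Banach fixed point theorem gives the fixed point, its uniqueness and the convergence of
the iterates.
-/

open Set Filter Topology Function NNReal

theorem LipschitzOnWith.exists_fixedPoint_tendsto_iterate {α : Type*} [MetricSpace α]
    {f : α → α} {s : Set α} {K : ℝ≥0} (hf : LipschitzOnWith K f s) (hK : K < 1)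
    (hsc : IsComplete s) (hsf : MapsTo f s s) (hs : s.Nonempty) :
    ∃ x ∈ s, IsFixedPt f x ∧ (∀ z ∈ s, IsFixedPt f z → z = x) ∧
      ∀ x₀ ∈ s, Tendsto (fun n ↦ f^[n] x₀) atTop (𝓝 x) := by
  have := hsc.completeSpace_coe
  have := hs.to_subtype
  have hg : ContractingWith K (hsf.restrict f s s) := ⟨hK, hf.mapsToRestrict hsf⟩
  refine ⟨hg.fixedPoint, (hg.fixedPoint).2, congrArg Subtype.val hg.fixedPoint_isFixedPt,
    fun z hz hfz ↦ congrArg Subtype.val (hg.fixedPoint_unique (x := ⟨z, hz⟩) (Subtype.ext hfz)),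
    fun x₀ hx₀ ↦ ?_⟩
  simpa [comp_def, hsf.iterate_restrict] using
    (continuous_subtype_val.tendsto _).comp (hg.tendsto_iterate_fixedPoint ⟨x₀, hx₀⟩)

theorem MonotoneOn.mapsTo_Icc_self {α : Type*} [Preorder α] {f : α → α} {a b : α}
    (hf : MonotoneOn f (Icc a b)) (ha : a ≤ f a) (hb : f b ≤ b) :
    MapsTo f (Icc a b) (Icc a b) := fun _ hx ↦
  ⟨ha.trans (hf (left_mem_Icc.2 (hx.1.trans hx.2)) hx hx.1),
    (hf hx (right_mem_Icc.2 (hx.1.trans hx.2)) hx.2).trans hb⟩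

theorem Real.lipschitzOnWith_rpow_Ici {p a : ℝ} (ha : 0 < a) (hp0 : 0 ≤ p) (hp1 : p ≤ 1) :
    LipschitzOnWith (p * a ^ (p - 1)).toNNReal (fun x : ℝ ↦ x ^ p) (Ici a) := by
  refine LipschitzOnWith.of_dist_le' fun x hx z hz ↦ ?_
  have hderiv (t : ℝ) (ht : t ∈ Ici a) : HasDerivWithinAt (· ^ p) (p * t ^ (p - 1)) (Ici a) t :=
    (Real.hasDerivAt_rpow_const (Or.inl (ha.trans_le ht).ne')).hasDerivWithinAt
  have hbound (t : ℝ) (ht : t ∈ Ici a) : ‖p * t ^ (p - 1)‖ ≤ p * a ^ (p - 1) := by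
    rw [Real.norm_of_nonneg (by positivity [(ha.trans_le ht).le])]
    exact mul_le_mul_of_nonneg_left (Real.rpow_le_rpow_of_nonpos ha ht (by linarith)) hp0
  simpa [Real.dist_eq] using (convex_Ici a).norm_image_sub_le_of_norm_hasDerivWithin_le
    hderiv hbound hz hx

noncomputable section

variable {τ p ρ y : ℝ}

def alpha (τ p ρ y x : ℝ) : ℝ := y - ρ + ρ * x ^ p / τ

def xa (τ p ρ : ℝ) : ℝ := (2 * ρ * p / ((1 + p) * τ)) ^ (1 / (1 - p))

theorem xa_pos (hτ : 0 < τ) (hp : 0 < p) (hρ : 0 < ρ) : 0 < xa τ p ρ := by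
  unfold xa; positivity

theorem div_mul_mul_xa_rpow_sub_one (hτ : 0 < τ) (hp0 : 0 < p) (hp1 : p < 1) (hρ : 0 < ρ) :
    ρ / τ * (p * xa τ p ρ ^ (p - 1)) = (1 + p) / 2 := by
  have hp1' : 1 - p ≠ 0 := by linarith
  rw [xa, ← Real.rpow_mul (by positivity), show 1 / (1 - p) * (p - 1) = -1 by field_simp; ring,
    Real.rpow_neg_one]
  field_simp

theorem lipschitzOnWith_alpha (hτ : 0 < τ) (hp0 : 0 < p) (hp1 : p < 1) (hρ : 0 < ρ) :
    LipschitzOnWith ((1 + p) / 2).toNNReal (alpha τ p ρ y) (Ici (xa τ p ρ)) := by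
  refine LipschitzOnWith.of_dist_le' fun x hx z hz ↦ ?_
  have hrpow := (Real.lipschitzOnWith_rpow_Ici (xa_pos hτ hp0 hρ) hp0.le hp1.le).dist_le_mul
    x hx z hz
  rw [Real.coe_toNNReal _ (by positivity [(xa_pos hτ hp0 hρ).le])] at hrpow
  calc dist (alpha τ p ρ y x) (alpha τ p ρ y z) = ρ / τ * dist (x ^ p) (z ^ p) := by
        rw [Real.dist_eq, Real.dist_eq, ← abs_of_pos (div_pos hρ hτ), ← abs_mul]
        unfold alpha
        ring_nf
    _ ≤ ρ / τ * (p * xa τ p ρ ^ (p - 1) * dist x z) := by gcongr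
    _ = (1 + p) / 2 * dist x z := by
        rw [← mul_assoc, div_mul_mul_xa_rpow_sub_one hτ hp0 hp1 hρ]

theorem monotoneOn_alpha (hτ : 0 ≤ τ) (hp : 0 ≤ p) (hρ : 0 ≤ ρ) :
    MonotoneOn (alpha τ p ρ y) (Ici 0) := fun x hx z _ hxz ↦ by
  unfold alpha
  gcongr

theorem alpha_lt_self_of_rpow_lt (hτ : 0 < τ) (hρ : 0 < ρ) (hy : y ^ p < τ) :
    alpha τ p ρ y y < y := by
  have : ρ * y ^ p / τ < ρ := by
    rw [div_lt_iff₀ hτ]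
    exact mul_lt_mul_of_pos_left hy hρ
  unfold alpha
  linarith

end

theorem alpha_fixed_point (τ p ρ y : ℝ) (hτ : 1 < τ) (hp0 : 0 < p) (hp1 : p < 1)
    (hρ : 0 < ρ)
    (hxa : (2 * ρ * p / ((1 + p) * τ)) ^ (1 / (1 - p)) ≤ y)
    (hha : (2 * ρ * p / ((1 + p) * τ)) ^ (1 / (1 - p)) -
        ρ * ((2 * ρ * p / ((1 + p) * τ)) ^ (1 / (1 - p))) ^ p / τ + ρ < y)
    (hyt : y < τ ^ (1 / p)) :
    ∃ xd ∈ Set.Icc ((2 * ρ * p / ((1 + p) * τ)) ^ (1 / (1 - p))) y,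
      (y - ρ + ρ * xd ^ p / τ = xd) ∧
      (∀ x ∈ Set.Icc ((2 * ρ * p / ((1 + p) * τ)) ^ (1 / (1 - p))) y,
        y - ρ + ρ * x ^ p / τ = x → x = xd) ∧
      (∀ x ∈ Set.Icc ((2 * ρ * p / ((1 + p) * τ)) ^ (1 / (1 - p))) y,
        (y - ρ + ρ * x ^ p / τ = x ↔ x + ρ - ρ * x ^ p / τ = y)) ∧
      (∀ x₀ ∈ Set.Icc ((2 * ρ * p / ((1 + p) * τ)) ^ (1 / (1 - p))) y,
        Filter.Tendsto (fun k : ℕ => (fun x : ℝ => y - ρ + ρ * x ^ p / τ)^[k] x₀)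
          Filter.atTop (nhds xd)) := by
  have hτ0 : 0 < τ := by linarith
  have hxa0 := xa_pos hτ0 hp0 hρ
  have hy : y ^ p < τ := by
    rwa [one_div, Real.lt_rpow_inv_iff_of_pos (hxa0.le.trans hxa) hτ0.le hp0] at hyt
  have hmaps : MapsTo (alpha τ p ρ y) (Icc (xa τ p ρ) y) (Icc (xa τ p ρ) y) :=
    ((monotoneOn_alpha hτ0.le hp0.le hρ.le).mono fun _ hx ↦ hxa0.le.trans hx.1).mapsTo_Icc_self
      (by unfold alpha xa at *; linarith) (alpha_lt_self_of_rpow_lt hτ0 hρ hy).le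
  have hK : ((1 + p) / 2).toNNReal < 1 := Real.toNNReal_lt_one.2 (by linarith)
  have hlip : LipschitzOnWith ((1 + p) / 2).toNNReal (alpha τ p ρ y) (Icc (xa τ p ρ) y) :=
    (lipschitzOnWith_alpha hτ0 hp0 hp1 hρ).mono Icc_subset_Ici_self
  obtain ⟨xd, hxd, hfix, huniq, hconv⟩ := hlip.exists_fixedPoint_tendsto_iterate hK
    isClosed_Icc.isComplete hmaps ⟨_, left_mem_Icc.2 hxa⟩
  exact ⟨xd, hxd, hfix, huniq, fun x _ ↦ ⟨fun h ↦ by linarith, fun h ↦ by linarith⟩, hconv⟩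
end

section
/- Suppose x_a ≤ τ^{1/p} and y ∈ ℝ satisfies 0 ≤ y < h_a, where x_a = (2ρp/((1+p)τ))^{1/(1−p)} and h_a = x_a − ρ·x_a^p/τ + ρ. Then 0 minimizes the proximal objective over [0, τ^{1/p}]: for every x ∈ [0, τ^{1/p}], (1/2)(x − y)² + ρ·ψ_{τ,p}(x) ≥ (1/2)y². -/
theorem zero_minimizes_prox (τ p ρ y : ℝ) (hτ : 1 < τ) (hp0 : 0 < p) (hp1 : p < 1)
    (hρ : 0 < ρ)
    (hxa : (2 * ρ * p / ((1 + p) * τ)) ^ (1 / (1 - p)) ≤ τ ^ (1 / p))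
    (hy0 : 0 ≤ y)
    (hy : y < (2 * ρ * p / ((1 + p) * τ)) ^ (1 / (1 - p)) -
        ρ * ((2 * ρ * p / ((1 + p) * τ)) ^ (1 / (1 - p))) ^ p / τ + ρ) :
    ∀ x ∈ Set.Icc (0 : ℝ) (τ ^ (1 / p)),
      (1 / 2) * y ^ 2 ≤ (1 / 2) * (x - y) ^ 2 + ρ * psi τ p x := by
  have hτ0 : (0:ℝ) < τ := by linarith
  have hp1' : (0:ℝ) < 1 + p := by linarith
  have hden : (0:ℝ) < (1 + p) * τ := by positivity
  set A := 2 * ρ * p / ((1 + p) * τ) with hA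
  have hA0 : 0 < A := div_pos (by positivity) hden
  set a := A ^ (1 / (1 - p)) with ha
  have ha0 : 0 < a := Real.rpow_pos_of_pos hA0 _
  have h1mp : (1:ℝ) - p ≠ 0 := ne_of_gt (by linarith)
  have hkey : a ^ (1 - p) = A := by
    rw [ha, ← Real.rpow_mul hA0.le, one_div, inv_mul_cancel₀ h1mp, Real.rpow_one]
  intro x hx
  obtain ⟨hx0, hxT⟩ := hx
  have hpsi : psi τ p x = x - x ^ (1 + p) / ((1 + p) * τ) := by
    rw [psi, if_pos (by rwa [abs_of_nonneg hx0]), abs_of_nonneg hx0]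
  rcases eq_or_lt_of_le hx0 with h0 | hx0'
  · rw [hpsi, ← h0, Real.zero_rpow (by positivity : (1:ℝ) + p ≠ 0)]
    ring_nf
    nlinarith [sq_nonneg y]
  -- x > 0 case
  have hxp : x ^ (1 + p) = x * x ^ p := by
    rw [Real.rpow_add hx0', Real.rpow_one]
  -- AM-GM
  have gm : x ^ p * a ^ (1 - p) ≤ p * x + (1 - p) * a :=
    Real.geom_mean_le_arith_mean2_weighted hp0.le (by linarith) hx0 ha0.le (by ring)
  rw [hkey, hA] at gm
  have hF1 : x ^ p * (2 * ρ * p) ≤ (p * x + (1 - p) * a) * ((1 + p) * τ) := by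
    rw [← mul_div_assoc] at gm
    exact (div_le_iff₀ hden).mp gm
  have haa : a ^ p * a ^ (1 - p) = a := by
    rw [← Real.rpow_add ha0]
    norm_num
  have hAD : A * ((1 + p) * τ) = 2 * ρ * p := by
    rw [hA]; field_simp
  have hF2 : a ^ p * (2 * ρ * p) = a * ((1 + p) * τ) := by
    rw [← hAD, ← hkey, ← mul_assoc, haa]
  have hy' : y * τ < a * τ - ρ * a ^ p + ρ * τ := by
    have h := mul_lt_mul_of_pos_right hy hτ0
    have e : (a - ρ * a ^ p / τ + ρ) * τ = a * τ - ρ * a ^ p + ρ * τ := by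
      field_simp
    linarith
  have h2p := mul_lt_mul_of_pos_left hy' (by positivity : (0:ℝ) < 2 * p)
  have hbr : 0 < τ * (2 * p * ρ - 2 * p * y - (1 - p) * a) := by nlinarith [h2p, hF2]
  have hbr2 : 0 ≤ (1 + p) * x * (τ * (2 * p * ρ - 2 * p * y - (1 - p) * a)) :=
    mul_nonneg (mul_nonneg hp1'.le hx0) hbr.le
  have h1x := mul_le_mul_of_nonneg_left hF1 hx0
  have main : 0 ≤ ((1/2) * (x - y) ^ 2 + ρ * x - (1/2) * y ^ 2) * ((1 + p) * τ) * (2 * p)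
      - ρ * x * x ^ p * (2 * p) := by nlinarith [h1x, hbr2]
  have final : ρ * x * x ^ p / ((1 + p) * τ) ≤ (1/2) * (x - y) ^ 2 + ρ * x - (1/2) * y ^ 2 := by
    rw [div_le_iff₀ hden]
    have h2 : ρ * x * x ^ p * (2 * p)
        ≤ ((1/2) * (x - y) ^ 2 + ρ * x - (1/2) * y ^ 2) * ((1 + p) * τ) * (2 * p) := by
      linarith [main]
    exact le_of_mul_le_mul_right h2 (by positivity)
  have expand : ρ * (x - x * x ^ p / ((1 + p) * τ))
      = ρ * x - ρ * x * x ^ p / ((1 + p) * τ) := by ring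
  rw [hpsi, hxp]
  linarith [final, expand]
end

section
/- Suppose y ∈ ℝ satisfies x_a ≤ y, h_a < y and y < τ^{1/p}, where x_a = (2ρp/((1+p)τ))^{1/(1−p)} and h_a = x_a − ρ·x_a^p/τ + ρ, and suppose x₊ ∈ (x_a, y] satisfies x₊ + ρ − ρ·x₊^p/τ = y. Then x₊ yields a strictly smaller proximal objective value than 0: (1/2)(x₊ − y)² + ρ·ψ_{τ,p}(x₊) < (1/2)y². -/
theorem solution_beats_zero (τ p ρ y : ℝ) (hτ : 1 < τ) (hp0 : 0 < p) (hp1 : p < 1)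
    (hρ : 0 < ρ)
    (hxa : (2 * ρ * p / ((1 + p) * τ)) ^ (1 / (1 - p)) ≤ y)
    (hha : (2 * ρ * p / ((1 + p) * τ)) ^ (1 / (1 - p)) -
        ρ * ((2 * ρ * p / ((1 + p) * τ)) ^ (1 / (1 - p))) ^ p / τ + ρ < y)
    (hyt : y < τ ^ (1 / p))
    (xs : ℝ) (hxs : xs ∈ Set.Ioc ((2 * ρ * p / ((1 + p) * τ)) ^ (1 / (1 - p))) y)
    (heq : xs + ρ - ρ * xs ^ p / τ = y) :
    (1 / 2) * (xs - y) ^ 2 + ρ * psi τ p xs < (1 / 2) * y ^ 2 := by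
  obtain ⟨hlt, hle⟩ := hxs
  have hτ0 : (0:ℝ) < τ := lt_trans one_pos hτ
  have h1p : (0:ℝ) < 1 + p := by linarith
  have hc : (0:ℝ) < 2 * ρ * p / ((1 + p) * τ) := by positivity
  have hxa_pos : (0:ℝ) < (2 * ρ * p / ((1 + p) * τ)) ^ (1 / (1 - p)) :=
    Real.rpow_pos_of_pos hc _
  have hx_pos : 0 < xs := lt_trans hxa_pos hlt
  have ht : 0 < xs ^ p := Real.rpow_pos_of_pos hx_pos p
  have h1mp : (0:ℝ) < 1 - p := by linarith
  -- key : c < xs ^ (1-p)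
  have hkey : 2 * ρ * p / ((1 + p) * τ) < xs ^ (1 - p) := by
    have h := Real.rpow_lt_rpow (le_of_lt hxa_pos) hlt h1mp
    rwa [← Real.rpow_mul hc.le, one_div_mul_cancel h1mp.ne', Real.rpow_one] at h
  -- key2 : 2ρp * xs^p < xs * ((1+p)*τ)
  have hkey2 : 2 * ρ * p * xs ^ p < xs * ((1 + p) * τ) := by
    have hmul := mul_lt_mul_of_pos_right hkey ht
    have hx1 : xs ^ (1 - p) * xs ^ p = xs :=
      by rw [← Real.rpow_add hx_pos, sub_add_cancel, Real.rpow_one]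
    rw [div_mul_eq_mul_div, div_lt_iff₀ (by positivity)] at hmul
    calc 2 * ρ * p * xs ^ p < xs ^ (1 - p) * xs ^ p * ((1 + p) * τ) := hmul
    _ = xs * ((1 + p) * τ) := by rw [hx1]
  have habs : |xs| = xs := abs_of_pos hx_pos
  have hlepow : |xs| ≤ τ ^ (1 / p) := by rw [habs]; linarith
  have hpsi : psi τ p xs = xs - xs * xs ^ p / ((1 + p) * τ) := by
    rw [psi, if_pos hlepow, habs, Real.rpow_add hx_pos 1 p, Real.rpow_one]
  rw [hpsi]
  subst heq
  have hτne : τ ≠ 0 := hτ0.ne'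
  have h1pne : (1 + p) ≠ 0 := h1p.ne'
  set t := xs ^ p with hts
  have hiden : (1 / 2 * (xs - (xs + ρ - ρ * t / τ)) ^ 2
        + ρ * (xs - xs * t / ((1 + p) * τ))) - 1 / 2 * (xs + ρ - ρ * t / τ) ^ 2
      = (2 * ρ * p * t - xs * ((1 + p) * τ)) * xs / (2 * ((1 + p) * τ)) := by
    field_simp
    ring
  have hneg : (2 * ρ * p * t - xs * ((1 + p) * τ)) * xs / (2 * ((1 + p) * τ)) < 0 :=
    div_neg_of_neg_of_pos (by nlinarith) (by positivity)
  linarith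
end
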